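/- arXiv:1509.03674 — 2 statements merged into one kernel-verified Lean document; each statement's English description precedes it below -/
import Mathlib

section
/- (Conjugation criterion via kernels.) Let μ and δ be matrix differential operators with coefficients in M_N(ℂ[[x]]), and suppose there exists a matrix differential operator ν with coefficients in M_N(ℂ[[x]]) such that νμ is monic. Then there exists a matrix differential operator η with coefficients in M_N(ℂ[[x]]) such that δμ = μη (equivalently, μ⁻¹δμ is a matrix differential operator) if and only if ker(μ)·δ ⊆ ker(μ), i.e., ψ·δ ∈ ker(μ) for every ψ ∈ ker(μ). -/
open Matrix PowerSeries

/-- `N×N` complex matrices. -/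
abbrev Mat (N : ℕ) := Matrix (Fin N) (Fin N) ℂ

/-- `N×N` matrices of formal power series. -/
abbrev MatPS (N : ℕ) := Matrix (Fin N) (Fin N) (PowerSeries ℂ)

/-- Entrywise formal differentiation of a matrix of power series. -/
noncomputable def psmatD {N : ℕ} (f : MatPS N) : MatPS N :=
  f.map fun g => PowerSeries.derivativeFun g

/-- Right action of the matrix differential operator `∑ ∂ⁱ aᵢ` (orders `0,…,r`) with
power-series coefficients on a matrix of power series: `f ↦ ∑ f⁽ⁱ⁾ aᵢ`. -/
noncomputable def actPS {N : ℕ} (a : ℕ → MatPS N) (r : ℕ) (f : MatPS N) : MatPS N :=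
  ∑ i ∈ Finset.range (r + 1), (psmatD)^[i] f * a i

/-- Embed a constant matrix into matrices of power series. -/
noncomputable def constPS {N : ℕ} (c : Mat N) : MatPS N :=
  c.map fun z => PowerSeries.C (R := ℂ) z

/-!
Write `ε = νμ`, monic of order `m`. If `ker(μ)·δ ⊆ ker(μ)`, then `νδμ` annihilates `ker ε`,
because `ψ·ν ∈ ker μ` for `ψ ∈ ker ε`. Right division by the monic `ε` gives `νδμ = εη + ρ` with
`ord ρ < m`, and `ρ` annihilates `ker ε` as well. Since `f·ε = g` has power-series solutions with
any prescribed first `m` Taylor coefficients, testing `ρ` on such solutions kills its coefficients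
one `X`-adic order at a time, so `ρ = 0`. Finally, given `h`, solve `f·ε = h·μ`: then
`h - f·ν ∈ ker μ`, whence `h·δμ = f·νδμ = f·εη = (h·μ)·η`.
-/

open Finset

theorem Nat.exists_eq_apply_of_causal {α : Type*} [Inhabited α] (Φ : ℕ → (ℕ → α) → α)
    (hΦ : ∀ n F G, (∀ k < n, F k = G k) → Φ n F = Φ n G) : ∃ F : ℕ → α, ∀ n, F n = Φ n F := by
  let F : ℕ → α := fun n =>
    Nat.strongRec (fun n rec => Φ n fun k => if h : k < n then rec k h else default) n
  refine ⟨F, fun n => ?_⟩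
  rw [show F n = _ from Nat.strongRec_eq ..]
  exact hΦ n _ _ fun k hk => dif_pos hk

section

variable {N : ℕ} {e : ℕ → MatPS N} {m : ℕ}

theorem psmatD_eq_mapMatrix :
    (psmatD : MatPS N → MatPS N) = (d⁄dX ℂ).toLinearMap.mapMatrix := rfl

theorem iterate_psmatD_apply (n : ℕ) (f : MatPS N) (i j : Fin N) :
    psmatD^[n] f i j = (d⁄dX ℂ)^[n] (f i j) := by
  induction n with
  | zero => rfl
  | succ n ih => simp only [Function.iterate_succ_apply', ← ih]; rfl

theorem psmatD_sum {ι : Type*} (s : Finset ι) (F : ι → MatPS N) :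
    psmatD (∑ i ∈ s, F i) = ∑ i ∈ s, psmatD (F i) :=
  map_sum (d⁄dX ℂ).toLinearMap.mapMatrix F s

theorem psmatD_mul (f g : MatPS N) : psmatD (f * g) = psmatD f * g + f * psmatD g := by
  refine Matrix.ext fun i j => ?_
  simp only [psmatD_eq_mapMatrix, LinearMap.mapMatrix_apply, map_apply, mul_apply,
    Matrix.add_apply, map_sum, ← sum_add_distrib]
  refine sum_congr rfl fun k _ => ?_
  simp only [Derivation.coeFn_coe, Derivation.leibniz, smul_eq_mul]
  ring

noncomputable def matCoeff (n : ℕ) : MatPS N →ₗ[ℂ] Mat N := (PowerSeries.coeff n).mapMatrix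

theorem matCoeff_apply (n : ℕ) (f : MatPS N) (i j : Fin N) :
    matCoeff n f i j = PowerSeries.coeff n (f i j) := rfl

theorem ext_matCoeff {f g : MatPS N} (h : ∀ n, matCoeff n f = matCoeff n g) : f = g := by
  ext i j n
  exact congrFun₂ (h n) i j

theorem matCoeff_mul (n : ℕ) (f g : MatPS N) :
    matCoeff n (f * g) = ∑ p ∈ antidiagonal n, matCoeff p.1 f * matCoeff p.2 g := by
  refine Matrix.ext fun i j => ?_
  simp only [matCoeff_apply, mul_apply, map_sum, PowerSeries.coeff_mul, Matrix.sum_apply]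
  exact sum_comm

theorem matCoeff_iterate_psmatD (k n : ℕ) (f : MatPS N) :
    matCoeff k (psmatD^[n] f) = ((k + 1).ascFactorial n : ℂ) • matCoeff (k + n) f := by
  refine Matrix.ext fun i j => ?_
  simp only [matCoeff_apply, iterate_psmatD_apply, PowerSeries.coeff_iterate_derivative,
    Matrix.smul_apply, smul_eq_mul]

theorem matCoeff_iterate_psmatD_mul (k n : ℕ) (f c : MatPS N) :
    matCoeff k (psmatD^[n] f * c) = ∑ p ∈ antidiagonal k,
      ((p.1 + 1).ascFactorial n : ℂ) • (matCoeff (p.1 + n) f * matCoeff p.2 c) := by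
  simp only [matCoeff_mul, matCoeff_iterate_psmatD, smul_mul_assoc]

theorem matCoeff_mul_of_forall_lt {u : ℕ} (f : MatPS N) {g : MatPS N}
    (hg : ∀ w < u, matCoeff w g = 0) : matCoeff u (f * g) = matCoeff 0 f * matCoeff u g := by
  rw [matCoeff_mul, sum_eq_single (0, u)]
  · rintro ⟨w, w'⟩ hp hne
    rw [HasAntidiagonal.mem_antidiagonal] at hp
    rw [hg w' (by grind), mul_zero]
  · simp

theorem matCoeff_zero_iterate_psmatD (n : ℕ) (f : MatPS N) :
    matCoeff 0 (psmatD^[n] f) = (n.factorial : ℂ) • matCoeff n f := by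
  rw [matCoeff_iterate_psmatD, zero_add, zero_add, Nat.one_ascFactorial]

theorem actPS_zero (a : ℕ → MatPS N) (r : ℕ) : actPS a r 0 = 0 := by
  simp [actPS, psmatD_eq_mapMatrix]

theorem iterate_psmatD_sub (n : ℕ) (f g : MatPS N) :
    psmatD^[n] (f - g) = psmatD^[n] f - psmatD^[n] g :=
  iterate_map_sub (d⁄dX ℂ).toLinearMap.mapMatrix n f g

theorem actPS_sub (a : ℕ → MatPS N) (r : ℕ) (f g : MatPS N) :
    actPS a r (f - g) = actPS a r f - actPS a r g := by
  simp only [actPS, iterate_psmatD_sub, sub_mul, sum_sub_distrib]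

theorem actPS_eq_iterate_add_of_monic (he : e m = 1) (f : MatPS N) :
    actPS e m f = psmatD^[m] f + ∑ i ∈ range m, psmatD^[i] f * e i := by
  rw [actPS, sum_range_succ, he, mul_one, add_comm]

theorem exists_actPS_eq_of_monic (he : e m = 1) (g : MatPS N) (v : ℕ → Mat N) :
    ∃ f, actPS e m f = g ∧ ∀ j < m, matCoeff j f = v j := by
  let S : ℕ → (ℕ → Mat N) → Mat N := fun k F => ∑ i ∈ range m, ∑ p ∈ antidiagonal k,
    ((p.1 + 1).ascFactorial i : ℂ) • (F (p.1 + i) * matCoeff p.2 (e i))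
  have hS : ∀ k f, matCoeff k (∑ i ∈ range m, psmatD^[i] f * e i) = S k (matCoeff · f) := by
    simp only [map_sum, matCoeff_iterate_psmatD_mul, S, implies_true]
  -- `[Xᵏ] (f·ε) = (k+1)⋯(k+m) [X^(k+m)] f + S k (lower coefficients of f)`, so the
  -- coefficients of `f` of index `≥ m` are determined recursively
  obtain ⟨F, hF⟩ := Nat.exists_eq_apply_of_causal (fun k F => if k < m then v k else
      ((k - m + 1).ascFactorial m : ℂ)⁻¹ • (matCoeff (k - m) g - S (k - m) F)) fun k F G hFG => by
    split_ifs with hkm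
    · rfl
    refine congrArg _ (congrArg _ (sum_congr rfl fun i hi => sum_congr rfl fun p hp => ?_))
    rw [mem_range] at hi
    rw [HasAntidiagonal.mem_antidiagonal] at hp
    rw [hFG _ (by omega)]
  let f : MatPS N := Matrix.of fun i j => PowerSeries.mk fun k => F k i j
  have hf : ∀ k, matCoeff k f = F k := fun k => Matrix.ext fun i j => by simp [matCoeff_apply, f]
  refine ⟨f, ext_matCoeff fun k => ?_, fun j hj => by rw [hf, hF, if_pos hj]⟩
  have hk : ((k + 1).ascFactorial m : ℂ) ≠ 0 := Nat.cast_ne_zero.2 (Nat.ascFactorial_pos k m).ne'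
  rw [actPS_eq_iterate_add_of_monic he, map_add, matCoeff_iterate_psmatD, hS, funext hf, hf,
    hF (k + m), if_neg (by omega), Nat.add_sub_cancel, smul_smul, mul_inv_cancel₀ hk, one_smul,
    sub_add_cancel]

def IsDiffOpLT (L : MatPS N → MatPS N) (n : ℕ) : Prop :=
  ∃ a : ℕ → MatPS N, ∀ f, L f = ∑ i ∈ range n, psmatD^[i] f * a i

theorem isDiffOpLT_actPS (a : ℕ → MatPS N) (r : ℕ) : IsDiffOpLT (actPS a r) (r + 1) :=
  ⟨a, fun _ => rfl⟩

theorem isDiffOpLT_iterate_psmatD_mul (n : ℕ) (c : MatPS N) :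
    IsDiffOpLT (fun f => psmatD^[n] f * c) (n + 1) :=
  ⟨fun i => if i = n then c else 0, fun f => by simp⟩

namespace IsDiffOpLT

variable {L M : MatPS N → MatPS N} {n k : ℕ}

theorem congr (hL : IsDiffOpLT L n) (h : ∀ f, M f = L f) : IsDiffOpLT M n := by
  rwa [show M = L from funext h]

theorem apply_zero (hL : IsDiffOpLT L n) : L 0 = 0 := by
  obtain ⟨a, ha⟩ := hL
  simp [ha, psmatD_eq_mapMatrix]

theorem mono (hL : IsDiffOpLT L n) (h : n ≤ k) : IsDiffOpLT L k := by
  obtain ⟨a, ha⟩ := hL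
  refine ⟨fun i => if i < n then a i else 0, fun f => ?_⟩
  rw [ha, ← sum_range_add_sum_Ico _ h, sum_eq_zero (s := Ico n k) fun i hi => ?_, add_zero]
  · exact sum_congr rfl fun i hi => by simp only [if_pos (mem_range.1 hi)]
  · simp only [if_neg (not_lt.2 (mem_Ico.1 hi).1), mul_zero]

theorem exists_actPS (hL : IsDiffOpLT L n) : ∃ a, ∀ f, L f = actPS a n f :=
  hL.mono n.le_succ

theorem zero : IsDiffOpLT (fun _ : MatPS N => 0) n :=
  ⟨0, fun _ => by simp⟩

theorem add (hL : IsDiffOpLT L n) (hM : IsDiffOpLT M n) : IsDiffOpLT (fun f => L f + M f) n := by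
  obtain ⟨a, ha⟩ := hL
  obtain ⟨b, hb⟩ := hM
  exact ⟨a + b, fun f => by simp only [ha, hb, Pi.add_apply, mul_add, sum_add_distrib]⟩

theorem sub (hL : IsDiffOpLT L n) (hM : IsDiffOpLT M n) : IsDiffOpLT (fun f => L f - M f) n := by
  obtain ⟨a, ha⟩ := hL
  obtain ⟨b, hb⟩ := hM
  exact ⟨a - b, fun f => by simp only [ha, hb, Pi.sub_apply, mul_sub, sum_sub_distrib]⟩

theorem sum {ι : Type*} (s : Finset ι) {L : ι → MatPS N → MatPS N}
    (hL : ∀ i ∈ s, IsDiffOpLT (L i) n) : IsDiffOpLT (fun f => ∑ i ∈ s, L i f) n := by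
  classical
  induction s using Finset.induction_on with
  | empty => simpa using (zero : IsDiffOpLT _ n)
  | insert i s hi ih =>
    simp only [sum_insert hi]
    exact (hL i (mem_insert_self i s)).add (ih fun j hj => hL j (mem_insert_of_mem hj))

theorem mul_right (hL : IsDiffOpLT L n) (c : MatPS N) : IsDiffOpLT (fun f => L f * c) n := by
  obtain ⟨a, ha⟩ := hL
  exact ⟨fun i => a i * c, fun f => by simp only [ha, sum_mul, mul_assoc]⟩

theorem psmatD_comp (hL : IsDiffOpLT L n) : IsDiffOpLT (fun f => psmatD (L f)) (n + 1) := by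
  obtain ⟨a, ha⟩ := hL
  refine (sum (L := fun i f => psmatD^[i + 1] f * a i + psmatD^[i] f * psmatD (a i)) (range n)
    fun i hi => ?_).congr fun f => ?_
  · exact ((isDiffOpLT_iterate_psmatD_mul (i + 1) (a i)).add
      ((isDiffOpLT_iterate_psmatD_mul i (psmatD (a i))).mono (by omega))).mono (by grind)
  · simp only [ha, psmatD_sum, psmatD_mul, Function.iterate_succ_apply']

theorem iterate_psmatD_comp (hL : IsDiffOpLT L n) (k : ℕ) :
    IsDiffOpLT (fun f => psmatD^[k] (L f)) (n + k) := by
  induction k with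
  | zero => exact hL
  | succ k ih => simpa only [Function.iterate_succ_apply', ← add_assoc] using ih.psmatD_comp

theorem actPS_comp (hL : IsDiffOpLT L n) (b : ℕ → MatPS N) (s : ℕ) :
    IsDiffOpLT (fun f => actPS b s (L f)) (n + s) :=
  sum (range (s + 1)) fun i hi =>
    ((hL.iterate_psmatD_comp i).mul_right (b i)).mono (by grind)

variable {P R : MatPS N → MatPS N}

theorem exists_eq_comp_actPS_add (he : e m = 1) (hP : IsDiffOpLT P n) :
    ∃ Q R, IsDiffOpLT Q n ∧ IsDiffOpLT R m ∧ ∀ f, P f = Q (actPS e m f) + R f := by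
  induction n generalizing P with
  | zero => exact ⟨_, P, zero, hP.mono m.zero_le, fun f => (zero_add _).symm⟩
  | succ n ih =>
    rcases lt_or_ge n m with hnm | hmn
    · exact ⟨_, P, zero, hP.mono hnm, fun f => (zero_add _).symm⟩
    obtain ⟨a, ha⟩ := hP
    have hE : IsDiffOpLT (fun f => actPS e m f - psmatD^[m] f) m :=
      ⟨e, fun f => by simp only [actPS_eq_iterate_add_of_monic he, add_sub_cancel_left]⟩
    -- `f⁽ⁿ⁾ aₙ` is the leading term of `(actPS e m f)⁽ⁿ⁻ᵐ⁾ aₙ`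
    have hlow : IsDiffOpLT (fun f => P f - psmatD^[n - m] (actPS e m f) * a n) n := by
      refine (IsDiffOpLT.sub ⟨a, fun _ => rfl⟩
        (((hE.iterate_psmatD_comp (n - m)).mul_right (a n)).mono (by omega))).congr fun f => ?_
      rw [ha, sum_range_succ, iterate_psmatD_sub, ← Function.iterate_add_apply,
        Nat.sub_add_cancel hmn, sub_mul]
      abel
    obtain ⟨Q, R, hQ, hR, hPQR⟩ := ih hlow
    refine ⟨fun g => Q g + psmatD^[n - m] g * a n, R,
      (hQ.mono n.le_succ).add ((isDiffOpLT_iterate_psmatD_mul _ _).mono (by omega)), hR,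
      fun f => ?_⟩
    rw [add_right_comm, ← hPQR f, sub_add_cancel]

theorem eq_zero_of_ker (he : e m = 1) (hR : IsDiffOpLT R m)
    (hker : ∀ f, actPS e m f = 0 → R f = 0) (f : MatPS N) : R f = 0 := by
  obtain ⟨ρ, hρ⟩ := hR
  -- a solution `φ ≡ Xⁱ⁰ (mod Xᵐ)` of `φ·ε = 0` isolates the lowest coefficient of `ρ i₀`
  have hcoeff : ∀ u, ∀ i < m, ∀ w < u, matCoeff w (ρ i) = 0 := by
    intro u
    induction u with
    | zero => exact fun _ _ _ hw => absurd hw (Nat.not_lt_zero _)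
    | succ u ih =>
      intro i₀ hi₀ w hw
      obtain hw | rfl := Nat.lt_succ_iff_lt_or_eq.1 hw
      · exact ih i₀ hi₀ w hw
      obtain ⟨φ, hφ, hjet⟩ := exists_actPS_eq_of_monic he 0 fun j => if j = i₀ then 1 else 0
      have hterm : ∀ i ∈ range m, matCoeff w (psmatD^[i] φ * ρ i) =
          if i = i₀ then (i₀.factorial : ℂ) • matCoeff w (ρ i₀) else 0 := fun i hi => by
        rw [matCoeff_mul_of_forall_lt _ (ih i (mem_range.1 hi)), matCoeff_zero_iterate_psmatD,
          hjet i (mem_range.1 hi)]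
        split_ifs with h
        · rw [h, smul_one_mul]
        · rw [smul_zero, zero_mul]
      have h := congrArg (matCoeff w) (hker φ hφ)
      rw [hρ, map_sum, sum_congr rfl hterm, sum_ite_eq', if_pos (mem_range.2 hi₀), map_zero,
        smul_eq_zero] at h
      exact h.resolve_left (Nat.cast_ne_zero.2 i₀.factorial_ne_zero)
  have hρ0 : ∀ i < m, ρ i = 0 := fun i hi => ext_matCoeff fun w => by
    rw [map_zero]
    exact hcoeff (w + 1) i hi w w.lt_succ_self
  rw [hρ]
  exact sum_eq_zero fun i hi => by rw [hρ0 i (mem_range.1 hi), mul_zero]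

theorem exists_eq_comp_actPS_of_ker (he : e m = 1) (hP : IsDiffOpLT P n)
    (hker : ∀ f, actPS e m f = 0 → P f = 0) :
    ∃ Q, IsDiffOpLT Q n ∧ ∀ f, P f = Q (actPS e m f) := by
  obtain ⟨Q, R, hQ, hR, hPQR⟩ := exists_eq_comp_actPS_add he hP
  have hR0 := hR.eq_zero_of_ker he fun f hf => by
    simpa [hker f hf, hf, hQ.apply_zero] using (hPQR f).symm
  exact ⟨Q, hQ, fun f => by rw [hPQR, hR0, add_zero]⟩

end IsDiffOpLT

end

/-- **Conjugation criterion via kernels.**  Let `μ = (a,r)` and `δ = (b,s)` be matrix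
differential operators over `M_N(ℂ[[x]])` and suppose `νμ` is monic for some operator
`ν = (c,t)`.  Then `δμ = μη` for some matrix differential operator `η` (equivalently,
`μ⁻¹δμ` is a matrix differential operator) if and only if `ker(μ)·δ ⊆ ker(μ)`. -/
theorem conjugation_iff_kernel_invariant {N : ℕ} (r s t : ℕ)
    (a b c : ℕ → MatPS N)
    -- νμ is monic, i.e. p·(νμ) = (p·ν)·μ is given by a monic operator:
    (hmonic : ∃ (m : ℕ) (e : ℕ → MatPS N), e m = 1 ∧
      ∀ f : MatPS N, actPS e m f = actPS a r (actPS c t f)) :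
    (∃ (t' : ℕ) (d : ℕ → MatPS N),
        ∀ f : MatPS N, actPS a r (actPS b s f) = actPS d t' (actPS a r f)) ↔
      ∀ ψ : MatPS N, actPS a r ψ = 0 → actPS a r (actPS b s ψ) = 0 := by
  refine ⟨fun ⟨t', d, hd⟩ ψ hψ => by rw [hd, hψ, actPS_zero], fun hker => ?_⟩
  obtain ⟨m, e, he, hE⟩ := hmonic
  have hP : IsDiffOpLT (fun f => actPS a r (actPS b s (actPS c t f))) (t + 1 + s + r) :=
    ((isDiffOpLT_actPS c t).actPS_comp b s).actPS_comp a r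
  obtain ⟨Q, hQ, hPQ⟩ := hP.exists_eq_comp_actPS_of_ker he fun f hf => hker _ (hE f ▸ hf)
  obtain ⟨q, hq⟩ := hQ.exists_actPS
  refine ⟨t + 1 + s + r, q, fun h => ?_⟩
  -- `h·μ = f·(νμ)` for some `f`, so `h - f·ν ∈ ker μ`
  obtain ⟨f, hf, -⟩ := exists_actPS_eq_of_monic he (actPS a r h) 0
  have hψ : actPS a r (h - actPS c t f) = 0 := by rw [actPS_sub, ← hE, hf, sub_self]
  have hδψ := hker _ hψ
  rw [actPS_sub, actPS_sub, sub_eq_zero] at hδψ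
  rw [hδψ, hPQ, hf, hq]
end

section
/- (Rationality of the center for N = 2.) Let w be a 2×2 weight matrix such that every element of D(w) admits a w-adjoint lying in D(w), suppose D(w) contains an operator of positive order whose leading coefficient is a nonsingular matrix polynomial, and suppose D(w) is noncommutative. Then for every central element δ ∈ Z(w), the eigenvalue polynomial Λ_δ ∈ M₂(ℂ[n]) (defined by p(x,n)·δ = Λ_δ(n)p(x,n)) takes scalar values, Λ_δ(n) = f_δ(n)·I for some f_δ ∈ ℂ[n], and the map δ ↦ f_δ is an injective ℂ-algebra homomorphism from Z(w) into ℂ[n]; consequently the spectrum of Z(w) is a rational curve. -/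
open MeasureTheory Polynomial Matrix Set Filter Topology
open scoped ComplexOrder

/-- `N×N` matrices of complex polynomials (matrix polynomials). -/
abbrev MatPoly (N : ℕ) := Matrix (Fin N) (Fin N) (Polynomial ℂ)

/-- Evaluation of a matrix polynomial at a real point. -/
noncomputable def evalM {N : ℕ} (p : MatPoly N) (x : ℝ) : Mat N :=
  p.map fun q => q.eval (x : ℂ)

/-- Entrywise (formal) derivative of a matrix polynomial. -/
noncomputable def matD {N : ℕ} (p : MatPoly N) : MatPoly N :=
  p.map fun q => Polynomial.derivative q

/-- Left multiplication of a matrix polynomial by a constant matrix. -/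
noncomputable def csmul {N : ℕ} (Λ : Mat N) (p : MatPoly N) : MatPoly N :=
  Λ.map (Polynomial.C) * p

/-- Degree of a matrix polynomial (the sup of the degrees of its entries, `⊥` for `0`). -/
noncomputable def mdeg {N : ℕ} (p : MatPoly N) : WithBot ℕ :=
  Finset.univ.sup fun ij : Fin N × Fin N => (p ij.1 ij.2).degree

/-- The matrix of `n`-th coefficients of a matrix polynomial. -/
def coeffMat {N : ℕ} (p : MatPoly N) (n : ℕ) : Mat N :=
  Matrix.of fun i j => (p i j).coeff n

/-- The scalar matrix polynomial `q·I`. -/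
noncomputable def scalarM (N : ℕ) (q : Polynomial ℂ) : MatPoly N :=
  Matrix.diagonal fun _ => q

/-- Right action of the matrix differential operator `∑ ∂^i a i` (orders `0,…,ℓ`)
on a matrix polynomial: `p ↦ ∑ p⁽ⁱ⁾ * a i`. -/
noncomputable def act {N : ℕ} (a : ℕ → MatPoly N) (ℓ : ℕ) (p : MatPoly N) : MatPoly N :=
  ∑ i ∈ Finset.range (ℓ + 1), (matD)^[i] p * a i

/-- Entrywise derivative of a matrix-valued function on `ℝ`. -/
noncomputable def mderiv {N : ℕ} (f : ℝ → Mat N) : ℝ → Mat N :=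
  fun x => Matrix.of fun i j => deriv (fun t => f t i j) x

/-- The matrix-valued pairing `⟨f,g⟩_w = ∫ f(x) w(x) g(x)ᴴ dx` of matrix-valued functions. -/
noncomputable def fip {N : ℕ} (w : ℝ → Mat N) (f g : ℝ → Mat N) : Mat N :=
  Matrix.of fun i j => ∫ x : ℝ, (f x * w x * (g x)ᴴ) i j

/-- The matrix-valued inner product `⟨p,q⟩_w` of matrix polynomials. -/
noncomputable def mip {N : ℕ} (w : ℝ → Mat N) (p q : MatPoly N) : Mat N :=
  fip w (evalM p) (evalM q)

/-- A weight matrix supported on `(x₀,x₁)`: vanishes off `(x₀,x₁)`, is entrywise smooth,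
Hermitian and positive definite on `(x₀,x₁)`, and has finite moments. -/
structure IsWeightMatrix {N : ℕ} (w : ℝ → Mat N) (x₀ x₁ : ℝ) : Prop where
  lt : x₀ < x₁
  vanish : ∀ x ∉ Set.Ioo x₀ x₁, w x = 0
  smooth : ∀ i j, ContDiffOn ℝ (⊤ : ℕ∞) (fun x => w x i j) (Set.Ioo x₀ x₁)
  herm : ∀ x ∈ Set.Ioo x₀ x₁, (w x).IsHermitian
  posdef : ∀ x ∈ Set.Ioo x₀ x₁, (w x).PosDef
  moments : ∀ m : ℕ, Integrable fun x : ℝ => |x| ^ m * ((w x).trace.re)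

/-- A sequence of orthogonal matrix polynomials for `w`: `P n` has degree `n` with
nonsingular (invertible) leading coefficient, and distinct terms are `w`-orthogonal. -/
structure IsOMPseq {N : ℕ} (w : ℝ → Mat N) (P : ℕ → MatPoly N) : Prop where
  degle : ∀ n, ∀ i j, (P n i j).natDegree ≤ n
  lead : ∀ n, IsUnit (coeffMat (P n) n)
  orth : ∀ m n, m ≠ n → mip w (P m) (P n) = 0

/-- The sequence of *monic* orthogonal matrix polynomials for `w`. -/
structure IsMonicOMP {N : ℕ} (w : ℝ → Mat N) (P : ℕ → MatPoly N) : Prop where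
  degle : ∀ n, ∀ i j, (P n i j).natDegree ≤ n
  monic : ∀ n, coeffMat (P n) n = 1
  orth : ∀ m n, m ≠ n → mip w (P m) (P n) = 0

/-- Entrywise formal differentiation `∂ : p ↦ p′` as a linear endomorphism. -/
noncomputable def DOp (N : ℕ) : Module.End ℂ (MatPoly N) where
  toFun p := matD p
  map_add' p q := by
    ext i j
    simp [matD, Matrix.map_apply, Matrix.add_apply]
  map_smul' c p := by
    ext i j
    simp [matD, Matrix.map_apply, Matrix.smul_apply]

/-- Right multiplication by a matrix polynomial, as a linear endomorphism. -/
noncomputable def rmulOp (N : ℕ) (a : MatPoly N) : Module.End ℂ (MatPoly N) :=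
  LinearMap.mulRight ℂ a

/-- The algebra `M_N(Ω)` of matrix differential operators with polynomial coefficients:
the subalgebra of endomorphisms generated by `∂` and right multiplications by matrix
polynomials. -/
noncomputable def DiffOpAlg (N : ℕ) : Subalgebra ℂ (Module.End ℂ (MatPoly N)) :=
  Algebra.adjoin ℂ ({DOp N} ∪ Set.range (rmulOp N))

/-- The algebra `D(w)`: matrix differential operators having the monic orthogonal
matrix polynomials `P` of `w` as eigenfunctions. -/
def DWcar {N : ℕ} (P : ℕ → MatPoly N) : Set (Module.End ℂ (MatPoly N)) :=
  {T | T ∈ DiffOpAlg N ∧ ∀ n, ∃ Λ : Mat N, T (P n) = csmul Λ (P n)}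

theorem matD_mul {N : ℕ} (p q : MatPoly N) :
    matD (p * q) = matD p * q + p * matD q := by
  ext i j
  simp only [matD, Matrix.map_apply, Matrix.mul_apply, Matrix.add_apply, map_sum,
    Polynomial.derivative_mul]
  rw [← Finset.sum_add_distrib]

theorem matD_map_C {N : ℕ} (Λ : Mat N) :
    matD (Λ.map Polynomial.C) = 0 := by
  ext i j
  simp [matD, Matrix.map_apply]

theorem matD_csmul {N : ℕ} (Λ : Mat N) (p : MatPoly N) :
    matD (csmul Λ p) = csmul Λ (matD p) := by
  unfold csmul
  rw [matD_mul, matD_map_C, zero_mul, zero_add]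

theorem csmul_csmul {N : ℕ} (A B : Mat N) (p : MatPoly N) :
    csmul A (csmul B p) = csmul (A * B) p := by
  unfold csmul
  rw [Matrix.map_mul, mul_assoc]

theorem csmul_one_mat {N : ℕ} (p : MatPoly N) : csmul (1 : Mat N) p = p := by
  unfold csmul
  rw [Matrix.map_one _ (map_zero _) (map_one _), one_mul]

theorem csmul_zero_mat {N : ℕ} (p : MatPoly N) : csmul (0 : Mat N) p = 0 := by
  unfold csmul
  rw [Matrix.map_zero _ (map_zero _), zero_mul]

theorem csmul_add_mat {N : ℕ} (A B : Mat N) (p : MatPoly N) :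
    csmul (A + B) p = csmul A p + csmul B p := by
  unfold csmul
  rw [Matrix.map_add _ (map_add _), add_mul]

theorem csmul_smul_one {N : ℕ} (r : ℂ) (p : MatPoly N) :
    csmul (r • (1 : Mat N)) p = r • p := by
  unfold csmul
  have : ((r • (1 : Mat N)).map Polynomial.C) = (Polynomial.C r) • (1 : MatPoly N) := by
    ext i j
    simp [Matrix.map_apply, Matrix.smul_apply, Matrix.one_apply, apply_ite,
      Polynomial.smul_eq_C_mul]
  rw [this, smul_mul_assoc, one_mul]
  ext i j
  simp [Matrix.smul_apply, Polynomial.smul_eq_C_mul]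

/-- Matrix differential operators commute with left multiplication by constant
matrices. -/
theorem DiffOpAlg_csmul {N : ℕ} {T : Module.End ℂ (MatPoly N)} (hT : T ∈ DiffOpAlg N) :
    ∀ (Λ : Mat N) (p : MatPoly N), T (csmul Λ p) = csmul Λ (T p) := by
  induction hT using Algebra.adjoin_induction with
  | mem x hx =>
    intro Λ p
    rcases hx with hx | ⟨a, rfl⟩
    · rw [Set.mem_singleton_iff] at hx
      subst hx
      exact matD_csmul Λ p
    · show csmul Λ p * a = csmul Λ (p * a)
      unfold csmul
      rw [mul_assoc]
  | algebraMap r =>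
    intro Λ p
    rw [Module.algebraMap_end_apply, Module.algebraMap_end_apply]
    unfold csmul
    rw [mul_smul_comm]
  | add x y hx hy ihx ihy =>
    intro Λ p
    rw [LinearMap.add_apply, LinearMap.add_apply, ihx, ihy]
    unfold csmul
    rw [mul_add]
  | mul x y hx hy ihx ihy =>
    intro Λ p
    rw [Module.End.mul_apply, Module.End.mul_apply, ihy, ihx]

theorem DWcar_zero {N : ℕ} (P : ℕ → MatPoly N) :
    (0 : Module.End ℂ (MatPoly N)) ∈ DWcar P :=
  ⟨zero_mem _, fun n => ⟨0, by rw [LinearMap.zero_apply, csmul_zero_mat]⟩⟩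

theorem DWcar_one {N : ℕ} (P : ℕ → MatPoly N) :
    (1 : Module.End ℂ (MatPoly N)) ∈ DWcar P :=
  ⟨one_mem _, fun n => ⟨1, by rw [Module.End.one_apply, csmul_one_mat]⟩⟩

theorem DWcar_add {N : ℕ} {P : ℕ → MatPoly N} {T S : Module.End ℂ (MatPoly N)}
    (hT : T ∈ DWcar P) (hS : S ∈ DWcar P) : T + S ∈ DWcar P := by
  refine ⟨add_mem hT.1 hS.1, fun n => ?_⟩
  obtain ⟨A, hA⟩ := hT.2 n
  obtain ⟨B, hB⟩ := hS.2 n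
  exact ⟨A + B, by rw [LinearMap.add_apply, hA, hB, csmul_add_mat]⟩

theorem DWcar_mul {N : ℕ} {P : ℕ → MatPoly N} {T S : Module.End ℂ (MatPoly N)}
    (hT : T ∈ DWcar P) (hS : S ∈ DWcar P) : T * S ∈ DWcar P := by
  refine ⟨mul_mem hT.1 hS.1, fun n => ?_⟩
  obtain ⟨A, hA⟩ := hT.2 n
  obtain ⟨B, hB⟩ := hS.2 n
  refine ⟨B * A, ?_⟩
  rw [Module.End.mul_apply, hB, DiffOpAlg_csmul hT.1, hA, csmul_csmul]

theorem DWcar_algebraMap {N : ℕ} (P : ℕ → MatPoly N) (r : ℂ) :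
    algebraMap ℂ (Module.End ℂ (MatPoly N)) r ∈ DWcar P := by
  refine ⟨Subalgebra.algebraMap_mem _ r, fun n => ⟨r • 1, ?_⟩⟩
  rw [Module.algebraMap_end_apply, csmul_smul_one]

/-- The center `Z(w)` of the algebra `D(w)`, as a subalgebra of the endomorphism
algebra. -/
noncomputable def ZW {N : ℕ} (P : ℕ → MatPoly N) :
    Subalgebra ℂ (Module.End ℂ (MatPoly N)) where
  carrier := {T | T ∈ DWcar P ∧ ∀ S ∈ DWcar P, T * S = S * T}
  zero_mem' := ⟨DWcar_zero P, fun S _ => by rw [zero_mul, mul_zero]⟩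
  one_mem' := ⟨DWcar_one P, fun S _ => by rw [one_mul, mul_one]⟩
  add_mem' := by
    rintro x y ⟨hx, cx⟩ ⟨hy, cy⟩
    exact ⟨DWcar_add hx hy, fun S hS => by rw [add_mul, mul_add, cx S hS, cy S hS]⟩
  mul_mem' := by
    rintro x y ⟨hx, cx⟩ ⟨hy, cy⟩
    refine ⟨DWcar_mul hx hy, fun S hS => ?_⟩
    rw [mul_assoc, cy S hS, ← mul_assoc, cx S hS, mul_assoc]
  algebraMap_mem' := fun r =>
    ⟨DWcar_algebraMap P r, fun S _ => (Algebra.commutes r S).symm ▸ Algebra.commutes r S⟩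

theorem mem_ZW_iff {N : ℕ} {P : ℕ → MatPoly N} {T : Module.End ℂ (MatPoly N)} :
    T ∈ ZW P ↔ T ∈ DWcar P ∧ ∀ S ∈ DWcar P, T * S = S * T := Iff.rfl

/-- `Z(w)` is commutative. -/
noncomputable instance ZWCommRing {N : ℕ} (P : ℕ → MatPoly N) : CommRing (ZW P) :=
  { (inferInstance : Ring (ZW P)) with
    mul_comm := fun a b => Subtype.ext <| by
      have ha := (mem_ZW_iff.mp a.property).2
      have hb := (mem_ZW_iff.mp b.property).1
      simpa using ha b.val hb }

namespace CRaux

open Polynomial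

variable {N : ℕ}

lemma matpoly_ext {p q : MatPoly N} (h : ∀ k, coeffMat p k = coeffMat q k) : p = q := by
  have h' : ∀ (i j : Fin N) (k : ℕ), (p i j).coeff k = (q i j).coeff k := fun i j k => by
    simpa [coeffMat] using congrFun (congrFun (h k) i) j
  ext i j k
  exact h' i j k

lemma coeffMat_add (p q : MatPoly N) (k : ℕ) :
    coeffMat (p + q) k = coeffMat p k + coeffMat q k := by
  ext i j; simp [coeffMat]

lemma coeffMat_sub (p q : MatPoly N) (k : ℕ) :
    coeffMat (p - q) k = coeffMat p k - coeffMat q k := by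
  ext i j; simp [coeffMat]

lemma coeffMat_smul (r : ℂ) (p : MatPoly N) (k : ℕ) :
    coeffMat (r • p) k = r • coeffMat p k := by
  ext i j; simp [coeffMat]

lemma coeffMat_sum {ι : Type*} (s : Finset ι) (f : ι → MatPoly N) (k : ℕ) :
    coeffMat (∑ x ∈ s, f x) k = ∑ x ∈ s, coeffMat (f x) k := by
  ext i j
  simp [coeffMat, Polynomial.finset_sum_coeff, Matrix.sum_apply]

lemma coeffMat_csmul (A : Mat N) (p : MatPoly N) (k : ℕ) :
    coeffMat (csmul A p) k = A * coeffMat p k := by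
  ext i j
  simp [coeffMat, csmul, Matrix.mul_apply, Polynomial.finset_sum_coeff]

lemma coeffMat_eq_zero {p : MatPoly N} {m k : ℕ} (h : ∀ i j, (p i j).natDegree ≤ m)
    (hk : m < k) : coeffMat p k = 0 := by
  ext i j
  simpa [coeffMat] using
    Polynomial.coeff_eq_zero_of_natDegree_lt (lt_of_le_of_lt (h i j) hk)

section P

variable {P : ℕ → MatPoly N}

lemma span_aux (hdeg : ∀ n, ∀ i j, ((P n) i j).natDegree ≤ n)
    (hmon : ∀ n, coeffMat (P n) n = 1) :
    ∀ (m : ℕ) (p : MatPoly N), (∀ i j, (p i j).natDegree ≤ m) →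
      ∃ C : ℕ → Mat N, p = ∑ k ∈ Finset.range (m + 1), csmul (C k) (P k) := by
  intro m
  induction m with
  | zero =>
    intro p hp
    refine ⟨fun _ => coeffMat p 0, ?_⟩
    rw [Finset.sum_range_one]
    refine matpoly_ext fun k => ?_
    rw [coeffMat_csmul]
    rcases Nat.eq_zero_or_pos k with rfl | hk
    · rw [hmon 0, mul_one]
    · rw [coeffMat_eq_zero hp hk, coeffMat_eq_zero (fun i j => hdeg 0 i j) hk, mul_zero]
  | succ m ih =>
    intro p hp
    set A := coeffMat p (m + 1) with hA
    set q := p - csmul A (P (m + 1)) with hq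
    have hqd : ∀ i j, (q i j).natDegree ≤ m := by
      intro i j
      rw [Polynomial.natDegree_le_iff_coeff_eq_zero]
      intro k hk
      have hco : coeffMat q k = 0 := by
        rw [hq, coeffMat_sub, coeffMat_csmul]
        rcases eq_or_lt_of_le (Nat.succ_le_of_lt hk) with hkm | hkm
        · rw [← hkm, hmon (m + 1), mul_one, hA, sub_self]
        · rw [coeffMat_eq_zero hp hkm, coeffMat_eq_zero (fun i j => hdeg (m + 1) i j) hkm,
            mul_zero, sub_self]
      simpa [coeffMat] using congrFun (congrFun hco i) j
    obtain ⟨C, hC⟩ := ih q hqd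
    refine ⟨fun k => if k = m + 1 then A else C k, ?_⟩
    beta_reduce
    rw [Finset.sum_range_succ, if_pos rfl]
    have hsum : ∑ k ∈ Finset.range (m + 1), csmul (if k = m + 1 then A else C k) (P k)
        = ∑ k ∈ Finset.range (m + 1), csmul (C k) (P k) := by
      refine Finset.sum_congr rfl fun k hk => ?_
      rw [if_neg (by have := Finset.mem_range.mp hk; omega)]
    rw [hsum, ← hC, hq]
    abel

lemma exists_span (hdeg : ∀ n, ∀ i j, ((P n) i j).natDegree ≤ n)
    (hmon : ∀ n, coeffMat (P n) n = 1) (p : MatPoly N) :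
    ∃ (m : ℕ) (C : ℕ → Mat N), p = ∑ k ∈ Finset.range (m + 1), csmul (C k) (P k) :=
  ⟨_, span_aux hdeg hmon _ p
    (fun i j => Finset.le_sup (f := fun ij : Fin N × Fin N => (p ij.1 ij.2).natDegree)
      (Finset.mem_univ (i, j)))⟩

lemma end_eq_zero (hdeg : ∀ n, ∀ i j, ((P n) i j).natDegree ≤ n)
    (hmon : ∀ n, coeffMat (P n) n = 1) {T : Module.End ℂ (MatPoly N)}
    (hT : T ∈ DiffOpAlg N) (h : ∀ n, T (P n) = 0) : T = 0 := by
  refine LinearMap.ext fun p => ?_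
  obtain ⟨m, C, rfl⟩ := exists_span hdeg hmon p
  rw [map_sum]
  have : ∀ k ∈ Finset.range (m + 1), T (csmul (C k) (P k)) = 0 := by
    intro k _
    rw [DiffOpAlg_csmul hT, h k]
    simp [csmul]
  rw [Finset.sum_congr rfl this]
  simp

/-- The eigenvalue matrix of `T` at level `n`. -/
noncomputable def Lam (P : ℕ → MatPoly N) (T : Module.End ℂ (MatPoly N)) (n : ℕ) : Mat N :=
  coeffMat (T (P n)) n

lemma DWcar_apply (hmon : ∀ n, coeffMat (P n) n = 1) {T : Module.End ℂ (MatPoly N)}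
    (hT : T ∈ DWcar P) (n : ℕ) : T (P n) = csmul (Lam P T n) (P n) := by
  obtain ⟨Λ, hΛ⟩ := hT.2 n
  have hL : Lam P T n = Λ := by
    rw [Lam, hΛ, coeffMat_csmul, hmon n, mul_one]
  rw [hL, hΛ]

lemma Lam_one (hmon : ∀ n, coeffMat (P n) n = 1) (n : ℕ) :
    Lam P (1 : Module.End ℂ (MatPoly N)) n = 1 := by
  rw [Lam, Module.End.one_apply, hmon n]

lemma Lam_mul (hmon : ∀ n, coeffMat (P n) n = 1) {T S : Module.End ℂ (MatPoly N)}
    (hT : T ∈ DWcar P) (hS : S ∈ DWcar P) (n : ℕ) :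
    Lam P (T * S) n = Lam P S n * Lam P T n := by
  rw [Lam, Module.End.mul_apply, DWcar_apply hmon hS n, DiffOpAlg_csmul hT.1,
    DWcar_apply hmon hT n, csmul_csmul, coeffMat_csmul, hmon n, mul_one]

lemma Lam_add (T S : Module.End ℂ (MatPoly N)) (n : ℕ) :
    Lam P (T + S) n = Lam P T n + Lam P S n := by
  rw [Lam, Lam, Lam, LinearMap.add_apply, coeffMat_add]

lemma Lam_sub (T S : Module.End ℂ (MatPoly N)) (n : ℕ) :
    Lam P (T - S) n = Lam P T n - Lam P S n := by
  rw [Lam, Lam, Lam, LinearMap.sub_apply, coeffMat_sub]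

lemma Lam_zero (n : ℕ) : Lam P (0 : Module.End ℂ (MatPoly N)) n = 0 := by
  rw [Lam, LinearMap.zero_apply]
  ext i j; simp [coeffMat]

lemma Lam_algebraMap (hmon : ∀ n, coeffMat (P n) n = 1) (r : ℂ) (n : ℕ) :
    Lam P (algebraMap ℂ (Module.End ℂ (MatPoly N)) r) n = r • 1 := by
  rw [Lam, Module.algebraMap_end_apply, coeffMat_smul, hmon n]

end P

/-! ### Normal form for elements of `DiffOpAlg` -/

/-- `T` is representable as `∑ ∂^i a i` with coefficients vanishing beyond the order. -/
def Rep (T : Module.End ℂ (MatPoly N)) : Prop :=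
  ∃ (ℓ : ℕ) (a : ℕ → MatPoly N), (∀ i, ℓ < i → a i = 0) ∧ ∀ p, T p = act a ℓ p

lemma matD_zero' : matD (0 : MatPoly N) = 0 := map_zero (DOp N)

lemma matD_sum {ι : Type*} (s : Finset ι) (f : ι → MatPoly N) :
    matD (∑ i ∈ s, f i) = ∑ i ∈ s, matD (f i) :=
  map_sum (DOp N) f s

lemma act_pad (a : ℕ → MatPoly N) {ℓ ℓ' : ℕ} (h : ℓ ≤ ℓ') (p : MatPoly N) :
    act (fun i => if i ≤ ℓ then a i else 0) ℓ' p = act a ℓ p := by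
  unfold act
  beta_reduce
  rw [← Finset.sum_subset (Finset.range_subset_range.2 (by omega) :
      Finset.range (ℓ + 1) ⊆ Finset.range (ℓ' + 1))
    (fun i _ hi => by
      rw [if_neg (fun hle => hi (Finset.mem_range.mpr (by omega))), mul_zero])]
  exact Finset.sum_congr rfl fun i hi => by
    rw [if_pos (Nat.lt_succ_iff.mp (Finset.mem_range.mp hi))]

lemma rep_zero : Rep (0 : Module.End ℂ (MatPoly N)) :=
  ⟨0, fun _ => 0, fun _ _ => rfl, fun p => by simp [act]⟩

lemma rep_one : Rep (1 : Module.End ℂ (MatPoly N)) :=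
  ⟨0, fun i => if i = 0 then 1 else 0, fun i hi => if_neg (by omega), fun p => by
    simp [act]⟩

lemma rep_add {T S : Module.End ℂ (MatPoly N)} (hT : Rep T) (hS : Rep S) : Rep (T + S) := by
  obtain ⟨ℓ₁, a, ha0, ha⟩ := hT
  obtain ⟨ℓ₂, b, hb0, hb⟩ := hS
  refine ⟨max ℓ₁ ℓ₂, fun i => (if i ≤ ℓ₁ then a i else 0) + (if i ≤ ℓ₂ then b i else 0),
    fun i hi => by
      show (if i ≤ ℓ₁ then a i else 0) + (if i ≤ ℓ₂ then b i else 0) = 0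
      rw [if_neg (by omega), if_neg (by omega), add_zero], fun p => ?_⟩
  have h1 := act_pad a (le_max_left ℓ₁ ℓ₂) p
  have h2 := act_pad b (le_max_right ℓ₁ ℓ₂) p
  rw [LinearMap.add_apply, ha, hb, ← h1, ← h2]
  unfold act
  rw [← Finset.sum_add_distrib]
  exact Finset.sum_congr rfl fun i _ => (mul_add _ _ _).symm

lemma rep_smul (r : ℂ) {T : Module.End ℂ (MatPoly N)} (hT : Rep T) : Rep (r • T) := by
  obtain ⟨ℓ, a, ha0, ha⟩ := hT
  refine ⟨ℓ, fun i => r • a i, fun i hi => by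
    show r • a i = 0
    rw [ha0 i hi, smul_zero], fun p => ?_⟩
  rw [LinearMap.smul_apply, ha]
  unfold act
  rw [Finset.smul_sum]
  exact Finset.sum_congr rfl fun i _ => (mul_smul_comm r _ _).symm

lemma rep_dop_mul {T : Module.End ℂ (MatPoly N)} (hT : Rep T) : Rep (DOp N * T) := by
  obtain ⟨ℓ, a, ha0, ha⟩ := hT
  refine ⟨ℓ + 1, fun i => (if i = 0 then 0 else a (i - 1)) + matD (a i), fun i hi => ?_,
    fun p => ?_⟩
  · show (if i = 0 then 0 else a (i - 1)) + matD (a i) = 0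
    rw [if_neg (by omega), ha0 i (by omega), ha0 (i - 1) (by omega), matD_zero', add_zero]
  · have hmain : matD (∑ i ∈ Finset.range (ℓ + 1), matD^[i] p * a i)
        = ∑ i ∈ Finset.range (ℓ + 2),
            matD^[i] p * ((if i = 0 then 0 else a (i - 1)) + matD (a i)) := by
      rw [matD_sum]
      have h1 : ∑ i ∈ Finset.range (ℓ + 1), matD (matD^[i] p * a i)
          = (∑ i ∈ Finset.range (ℓ + 1), matD^[i + 1] p * a i)
            + ∑ i ∈ Finset.range (ℓ + 1), matD^[i] p * matD (a i) := by
        rw [← Finset.sum_add_distrib]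
        refine Finset.sum_congr rfl fun i _ => ?_
        rw [matD_mul, Function.iterate_succ_apply']
      have h2 : ∑ i ∈ Finset.range (ℓ + 2),
          matD^[i] p * ((if i = 0 then 0 else a (i - 1)) + matD (a i))
          = (∑ i ∈ Finset.range (ℓ + 2), matD^[i] p * (if i = 0 then 0 else a (i - 1)))
            + ∑ i ∈ Finset.range (ℓ + 2), matD^[i] p * matD (a i) := by
        rw [← Finset.sum_add_distrib]
        exact Finset.sum_congr rfl fun i _ => mul_add _ _ _
      rw [h1, h2]
      congr 1
      · have h3 : ∑ i ∈ Finset.range (ℓ + 2), matD^[i] p * (if i = 0 then 0 else a (i - 1))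
            = (∑ i ∈ Finset.range (ℓ + 1),
                matD^[i + 1] p * (if i + 1 = 0 then 0 else a (i + 1 - 1)))
              + matD^[0] p * (if (0 : ℕ) = 0 then (0 : MatPoly N) else a (0 - 1)) :=
          Finset.sum_range_succ' _ (ℓ + 1)
        rw [h3, if_pos rfl, mul_zero, add_zero]
        refine Finset.sum_congr rfl fun i _ => ?_
        rw [if_neg (Nat.succ_ne_zero i), Nat.add_sub_cancel]
      · have h4 : ∑ i ∈ Finset.range (ℓ + 2), matD^[i] p * matD (a i)
            = (∑ i ∈ Finset.range (ℓ + 1), matD^[i] p * matD (a i))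
              + matD^[ℓ + 1] p * matD (a (ℓ + 1)) := Finset.sum_range_succ _ (ℓ + 1)
        rw [h4, ha0 (ℓ + 1) (by omega), matD_zero', mul_zero, add_zero]
    rw [Module.End.mul_apply, ha]
    show matD (act a ℓ p) = act _ (ℓ + 1) p
    unfold act
    beta_reduce
    exact hmain

lemma rep_rmul_mul (b : MatPoly N) {T : Module.End ℂ (MatPoly N)} (hT : Rep T) :
    Rep (rmulOp N b * T) := by
  obtain ⟨ℓ, a, ha0, ha⟩ := hT
  refine ⟨ℓ, fun i => a i * b, fun i hi => by
    show a i * b = 0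
    rw [ha0 i hi, zero_mul], fun p => ?_⟩
  rw [Module.End.mul_apply, ha]
  show act a ℓ p * b = _
  unfold act
  rw [Finset.sum_mul]
  exact Finset.sum_congr rfl fun i _ => mul_assoc _ _ _

lemma rep_of_mem {T : Module.End ℂ (MatPoly N)} (hT : T ∈ DiffOpAlg N) : Rep T := by
  have h1 : T ∈ Submodule.span ℂ
      ((Submonoid.closure ({DOp N} ∪ Set.range (rmulOp N)) :
        Submonoid (Module.End ℂ (MatPoly N))) : Set (Module.End ℂ (MatPoly N))) := by
    rw [← Algebra.adjoin_eq_span]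
    exact hT
  refine Submodule.span_induction ?_ rep_zero (fun x y _ _ hx hy => rep_add hx hy)
    (fun r x _ hx => rep_smul r hx) h1
  intro x hx
  induction hx using Submonoid.closure_induction_left with
  | one => exact rep_one
  | mul_left g hg y hy ih =>
    rcases hg with hg | ⟨b, rfl⟩
    · rw [Set.mem_singleton_iff] at hg
      subst hg
      exact rep_dop_mul ih
    · exact rep_rmul_mul b ih

/-! ### The eigenvalue formula -/

lemma matD_scalarM (q : Polynomial ℂ) : matD (scalarM N q) = scalarM N (derivative q) := by
  ext i j
  rcases eq_or_ne i j with rfl | hij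
  · simp [matD, scalarM]
  · simp [matD, scalarM, Matrix.diagonal_apply_ne _ hij]

lemma matD_iter_scalarM (k : ℕ) (q : Polynomial ℂ) :
    matD^[k] (scalarM N q) = scalarM N (derivative^[k] q) := by
  induction k generalizing q with
  | zero => rfl
  | succ k ih =>
    rw [Function.iterate_succ_apply, Function.iterate_succ_apply, matD_scalarM, ih]

section P2

variable {P : ℕ → MatPoly N}

lemma P_zero (hdeg : ∀ n, ∀ i j, ((P n) i j).natDegree ≤ n)
    (hmon : ∀ n, coeffMat (P n) n = 1) : P 0 = 1 := by
  refine matpoly_ext fun k => ?_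
  rcases Nat.eq_zero_or_pos k with rfl | hk
  · rw [hmon 0]
    ext i j
    rcases eq_or_ne i j with rfl | hij
    · simp [coeffMat, Matrix.one_apply]
    · simp [coeffMat, Matrix.one_apply, hij]
  · rw [coeffMat_eq_zero (fun i j => hdeg 0 i j) hk]
    ext i j
    rcases eq_or_ne i j with rfl | hij
    · simp [coeffMat, Matrix.one_apply, Polynomial.coeff_one, hk.ne']
    · simp [coeffMat, Matrix.one_apply, hij]

lemma coeff_T_Xn (hdeg : ∀ n, ∀ i j, ((P n) i j).natDegree ≤ n)
    (hmon : ∀ n, coeffMat (P n) n = 1) {T : Module.End ℂ (MatPoly N)}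
    (hT : T ∈ DWcar P) (n : ℕ) :
    coeffMat (T (scalarM N (X ^ n))) n = Lam P T n := by
  cases n with
  | zero =>
    rw [pow_zero]
    have h1 : scalarM N (1 : Polynomial ℂ) = P 0 := by
      rw [P_zero hdeg hmon]
      exact Matrix.diagonal_one
    rw [h1]
    rfl
  | succ m =>
    set r : MatPoly N := scalarM N (X ^ (m + 1)) - P (m + 1) with hr
    have hXn : coeffMat (scalarM N (X ^ (m + 1)) : MatPoly N) (m + 1) = 1 := by
      ext i j
      rcases eq_or_ne i j with rfl | hij
      · simp [coeffMat, scalarM, Matrix.one_apply]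
      · simp [coeffMat, scalarM, Matrix.diagonal_apply_ne _ hij, Matrix.one_apply, hij]
    have hXhigh : ∀ k, m + 1 < k →
        coeffMat (scalarM N (X ^ (m + 1)) : MatPoly N) k = 0 := by
      intro k hk
      ext i j
      rcases eq_or_ne i j with rfl | hij
      · have hkne : ¬ k = m + 1 := by omega
        simp [coeffMat, scalarM, Polynomial.coeff_X_pow, hkne]
      · simp [coeffMat, scalarM, Matrix.diagonal_apply_ne _ hij]
    have hrd : ∀ i j, (r i j).natDegree ≤ m := by
      intro i j
      rw [Polynomial.natDegree_le_iff_coeff_eq_zero]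
      intro k hk
      have hco : coeffMat r k = 0 := by
        rw [hr, coeffMat_sub]
        rcases eq_or_lt_of_le (Nat.succ_le_of_lt hk) with hkm | hkm
        · rw [← hkm, hXn, hmon (m + 1), sub_self]
        · rw [hXhigh k hkm, coeffMat_eq_zero (fun i j => hdeg (m + 1) i j) hkm, sub_self]
      simpa [coeffMat] using congrFun (congrFun hco i) j
    obtain ⟨C, hC⟩ := span_aux hdeg hmon m r hrd
    have hdecomp : scalarM N (X ^ (m + 1)) = P (m + 1) + r := by
      rw [hr, add_sub_cancel]
    rw [hdecomp, map_add, coeffMat_add, hC, map_sum, coeffMat_sum]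
    have hz : ∀ k ∈ Finset.range (m + 1), coeffMat (T (csmul (C k) (P k))) (m + 1) = 0 := by
      intro k hk
      rw [DiffOpAlg_csmul hT.1, DWcar_apply hmon hT k, csmul_csmul, coeffMat_csmul,
        coeffMat_eq_zero (fun i j => hdeg k i j)
          (by have := Finset.mem_range.mp hk; omega), mul_zero]
    rw [Finset.sum_congr rfl hz, Finset.sum_const, smul_zero, add_zero]
    rfl

lemma coeff_act_Xn (ℓ : ℕ) (a : ℕ → MatPoly N) (n : ℕ) :
    coeffMat (act a ℓ (scalarM N (X ^ n))) n
      = ∑ k ∈ Finset.range (ℓ + 1), (n.descFactorial k : ℂ) • coeffMat (a k) k := by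
  unfold act
  rw [coeffMat_sum]
  refine Finset.sum_congr rfl fun k _ => ?_
  rw [matD_iter_scalarM, Polynomial.iterate_derivative_X_pow_eq_smul]
  ext i j
  have hdm : (scalarM N ((n.descFactorial k : ℂ) • X ^ (n - k)) * a k) i j
      = ((n.descFactorial k : ℂ) • X ^ (n - k)) * (a k) i j := by
    simp [scalarM, Matrix.diagonal_mul]
  show ((scalarM N ((n.descFactorial k : ℂ) • X ^ (n - k)) * a k) i j).coeff n
      = ((n.descFactorial k : ℂ) • coeffMat (a k) k) i j
  rw [hdm, smul_mul_assoc, Polynomial.coeff_smul]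
  rcases le_or_gt k n with hkn | hkn
  · have h1 : (X ^ (n - k) * (a k) i j).coeff n = ((a k) i j).coeff k := by
      have h2 := Polynomial.coeff_X_pow_mul ((a k) i j) (n - k) k
      rwa [(by omega : k + (n - k) = n)] at h2
    rw [h1]
    simp [coeffMat, smul_eq_mul]
  · rw [Nat.descFactorial_eq_zero_iff_lt.mpr hkn]
    simp [coeffMat]

lemma Lam_poly (hdeg : ∀ n, ∀ i j, ((P n) i j).natDegree ≤ n)
    (hmon : ∀ n, coeffMat (P n) n = 1) {T : Module.End ℂ (MatPoly N)}
    (hT : T ∈ DWcar P) :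
    ∃ M : Matrix (Fin N) (Fin N) (Polynomial ℂ),
      ∀ (n : ℕ) (i j : Fin N), Lam P T n i j = (M i j).eval (n : ℂ) := by
  obtain ⟨ℓ, a, _, ha⟩ := rep_of_mem hT.1
  refine ⟨Matrix.of fun i j => ∑ k ∈ Finset.range (ℓ + 1),
      Polynomial.C (((a k) i j).coeff k) * descPochhammer ℂ k, fun n i j => ?_⟩
  have h1 : Lam P T n
      = ∑ k ∈ Finset.range (ℓ + 1), (n.descFactorial k : ℂ) • coeffMat (a k) k := by
    rw [← coeff_T_Xn hdeg hmon hT n, ha, coeff_act_Xn]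
  rw [h1, Matrix.sum_apply]
  simp only [Matrix.of_apply, Polynomial.eval_finset_sum, Polynomial.eval_mul,
    Polynomial.eval_C, descPochhammer_eval_eq_descFactorial]
  refine Finset.sum_congr rfl fun k _ => ?_
  simp [coeffMat, smul_eq_mul, mul_comm]

end P2

/-! ### 2×2 linear algebra -/

lemma mat2_ext {M K : Mat 2} (h00 : M 0 0 = K 0 0) (h01 : M 0 1 = K 0 1)
    (h10 : M 1 0 = K 1 0) (h11 : M 1 1 = K 1 1) : M = K := by
  refine Matrix.ext fun i j => ?_
  fin_cases i <;> fin_cases j <;> assumption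

lemma smul_one_apply_eq (c : ℂ) : ∀ i : Fin 2, (c • (1 : Mat 2)) i i = c := fun i => by
  simp [Matrix.smul_apply, Matrix.one_apply]

lemma smul_one_apply_ne (c : ℂ) {i j : Fin 2} (h : i ≠ j) : (c • (1 : Mat 2)) i j = 0 := by
  simp [Matrix.smul_apply, Matrix.one_apply, h]

lemma addsmul_apply (α β : ℂ) (z : Mat 2) (i j : Fin 2) :
    (α • (1 : Mat 2) + β • z) i j = α * (if i = j then 1 else 0) + β * z i j := by
  simp [Matrix.add_apply, Matrix.smul_apply, Matrix.one_apply, mul_ite]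

lemma nonscalar_cases {z : Mat 2} (h : ∀ c : ℂ, z ≠ c • 1) :
    z 0 1 ≠ 0 ∨ z 1 0 ≠ 0 ∨ z 0 0 ≠ z 1 1 := by
  by_contra hc
  push_neg at hc
  obtain ⟨h1, h2, h3⟩ := hc
  refine h (z 0 0) (mat2_ext ?_ ?_ ?_ ?_)
  · rw [smul_one_apply_eq]
  · rw [h1, smul_one_apply_ne _ (by decide)]
  · rw [h2, smul_one_apply_ne _ (by decide)]
  · rw [h3, smul_one_apply_eq]

lemma comm_span {z X : Mat 2} (hns : z 0 1 ≠ 0 ∨ z 1 0 ≠ 0 ∨ z 0 0 ≠ z 1 1)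
    (h : z * X = X * z) : ∃ α β : ℂ, X = α • 1 + β • z := by
  have e00 : z 0 0 * X 0 0 + z 0 1 * X 1 0 = X 0 0 * z 0 0 + X 0 1 * z 1 0 := by
    have := congrFun (congrFun h 0) 0
    simpa [Matrix.mul_apply, Fin.sum_univ_two] using this
  have e01 : z 0 0 * X 0 1 + z 0 1 * X 1 1 = X 0 0 * z 0 1 + X 0 1 * z 1 1 := by
    have := congrFun (congrFun h 0) 1
    simpa [Matrix.mul_apply, Fin.sum_univ_two] using this
  have e10 : z 1 0 * X 0 0 + z 1 1 * X 1 0 = X 1 0 * z 0 0 + X 1 1 * z 1 0 := by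
    have := congrFun (congrFun h 1) 0
    simpa [Matrix.mul_apply, Fin.sum_univ_two] using this
  by_cases hb : z 0 1 = 0
  · by_cases hcc : z 1 0 = 0
    · have had : z 0 0 ≠ z 1 1 := by tauto
      have had' : z 0 0 - z 1 1 ≠ 0 := sub_ne_zero.mpr had
      have hq : X 0 1 = 0 := by
        have h' : X 0 1 * (z 0 0 - z 1 1) = 0 := by
          linear_combination e01 + (X 0 0 - X 1 1) * hb
        rcases mul_eq_zero.mp h' with h'' | h''
        · exact h''
        · exact absurd (sub_eq_zero.mp h'') had
      have hrr : X 1 0 = 0 := by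
        have h' : X 1 0 * (z 1 1 - z 0 0) = 0 := by
          linear_combination e10 + (X 1 1 - X 0 0) * hcc
        rcases mul_eq_zero.mp h' with h'' | h''
        · exact h''
        · exact absurd (sub_eq_zero.mp h'').symm had
      refine ⟨X 0 0 - (X 0 0 - X 1 1) / (z 0 0 - z 1 1) * z 0 0,
        (X 0 0 - X 1 1) / (z 0 0 - z 1 1), mat2_ext ?_ ?_ ?_ ?_⟩ <;>
        rw [addsmul_apply]
      · rw [if_pos rfl]; ring
      · rw [if_neg (by decide), hq, hb]; ring
      · rw [if_neg (by decide), hrr, hcc]; ring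
      · rw [if_pos rfl]
        field_simp
        ring
    · -- z 1 0 ≠ 0, z 0 1 = 0
      have hq : X 0 1 = 0 := by
        have h' : X 0 1 * z 1 0 = 0 := by
          linear_combination X 1 0 * hb - e00
        rcases mul_eq_zero.mp h' with h'' | h''
        · exact h''
        · exact absurd h'' hcc
      refine ⟨X 0 0 - X 1 0 / z 1 0 * z 0 0, X 1 0 / z 1 0, mat2_ext ?_ ?_ ?_ ?_⟩ <;>
        rw [addsmul_apply]
      · rw [if_pos rfl]; ring
      · rw [if_neg (by decide), hq, hb]; ring
      · rw [if_neg (by decide)]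
        field_simp
        ring
      · rw [if_pos rfl]
        field_simp
        first
        | linear_combination e10
        | linear_combination -e10
        | linear_combination z 1 0 * e10
        | linear_combination (-(z 1 0 : ℂ)) * e10
  · -- z 0 1 ≠ 0
    refine ⟨X 0 0 - X 0 1 / z 0 1 * z 0 0, X 0 1 / z 0 1, mat2_ext ?_ ?_ ?_ ?_⟩ <;>
      rw [addsmul_apply]
    · rw [if_pos rfl]; ring
    · rw [if_neg (by decide)]
      field_simp
      ring
    · rw [if_neg (by decide)]
      field_simp
      first
      | linear_combination e00
      | linear_combination -e00
      | linear_combination z 0 1 * e00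
      | linear_combination (-(z 0 1 : ℂ)) * e00
    · rw [if_pos rfl]
      field_simp
      first
      | linear_combination e01
      | linear_combination -e01
      | linear_combination z 0 1 * e01
      | linear_combination (-(z 0 1 : ℂ)) * e01

lemma scalar_of_comm {z A B : Mat 2} (hA : z * A = A * z) (hB : z * B = B * z)
    (hAB : A * B ≠ B * A) : ∃ c : ℂ, z = c • 1 := by
  by_contra h
  push_neg at h
  have hns := nonscalar_cases h
  obtain ⟨α, β, rfl⟩ := comm_span hns hA
  obtain ⟨γ, δ, rfl⟩ := comm_span hns hB
  apply hAB
  simp only [add_mul, mul_add, smul_add, smul_mul_assoc, mul_smul_comm, smul_smul,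
    one_mul, mul_one]
  rw [mul_comm γ α, mul_comm γ β, mul_comm δ α, mul_comm δ β]
  abel

/-! ### Polynomial interpolation helpers -/

lemma poly_ext_nat {f g : Polynomial ℂ} (h : ∀ n : ℕ, f.eval (n : ℂ) = g.eval (n : ℂ)) :
    f = g := by
  have hz : f - g = 0 := by
    refine Polynomial.eq_zero_of_infinite_isRoot _ ?_
    refine Set.infinite_of_injective_forall_mem (f := fun n : ℕ => (n : ℂ))
      Nat.cast_injective fun n => ?_
    show (f - g).IsRoot ((n : ℂ))
    simp [Polynomial.IsRoot, h n]
  exact sub_eq_zero.mp hz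

lemma poly_zero_of_infinite_nat {f : Polynomial ℂ} {S : Set ℕ} (hS : S.Infinite)
    (h : ∀ n ∈ S, f.eval (n : ℂ) = 0) : f = 0 := by
  refine Polynomial.eq_zero_of_infinite_isRoot _ ?_
  have himg : ((fun n : ℕ => (n : ℂ)) '' S).Infinite :=
    hS.image (Set.injOn_of_injective Nat.cast_injective)
  refine Set.Infinite.mono ?_ himg
  rintro x ⟨n, hn, rfl⟩
  exact h n hn

lemma infinite_nonroots {e : Polynomial ℂ} (he : e ≠ 0) :
    {n : ℕ | e.eval (n : ℂ) ≠ 0}.Infinite := by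
  have hroots : {x : ℂ | e.IsRoot x}.Finite := Polynomial.finite_setOf_isRoot he
  have hfin : {n : ℕ | e.eval (n : ℂ) = 0}.Finite := by
    have heq : {n : ℕ | e.eval (n : ℂ) = 0}
        = (fun n : ℕ => (n : ℂ)) ⁻¹' {x : ℂ | e.IsRoot x} := rfl
    rw [heq]
    exact Set.Finite.preimage (Set.injOn_of_injective Nat.cast_injective) hroots
  have := hfin.infinite_compl
  simpa [Set.compl_setOf] using this

lemma smul_one_inj {c d : ℂ} (h : c • (1 : Mat 2) = d • (1 : Mat 2)) : c = d := by
  have := congrFun (congrFun h 0) 0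
  simpa [Matrix.smul_apply, Matrix.one_apply] using this

end CRaux

open CRaux

/-- **Rationality of the center for `N = 2`.**  If `D(w)` (for a `2×2` weight matrix
`w`) is closed under `w`-adjoints, contains an operator of positive order with
nonsingular leading coefficient, and is noncommutative, then the eigenvalue polynomial
of every central element takes scalar values, and the resulting map is an injective
`ℂ`-algebra homomorphism `Z(w) → ℂ[n]`; hence the spectrum of `Z(w)` is a rational
curve. -/
theorem center_rational_of_N_eq_two {x₀ x₁ : ℝ}
    (w : ℝ → Mat 2) (hw : IsWeightMatrix w x₀ x₁)
    (P : ℕ → MatPoly 2) (hP : IsMonicOMP w P)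
    -- every element of D(w) has a w-adjoint lying in D(w):
    (hadj : ∀ T ∈ DWcar P, ∃ Td ∈ DWcar P,
      ∀ p q : MatPoly 2, mip w (T p) q = mip w p (Td q))
    -- D(w) contains an operator of positive order with nonsingular leading coefficient:
    (hord : ∃ T ∈ DWcar P, ∃ (k : ℕ) (a : ℕ → MatPoly 2),
      0 < k ∧ (∀ p, T p = act a k p) ∧ (a k).det ≠ 0)
    -- D(w) is noncommutative:
    (hnc : ∃ T ∈ DWcar P, ∃ S ∈ DWcar P, T * S ≠ S * T) :
    -- the eigenvalue map restricted to the center is scalar-valued, and defines an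
    -- injective ℂ-algebra homomorphism Z(w) → ℂ[n]:
    ∃ Φ : ZW P →ₐ[ℂ] Polynomial ℂ, Function.Injective Φ ∧
      ∀ (δ : ZW P) (n : ℕ),
        (δ : Module.End ℂ (MatPoly 2)) (P n)
          = csmul (((Φ δ).eval ((n : ℂ))) • (1 : Mat 2)) (P n) := by
  classical
  have hdeg := hP.degle
  have hmon := hP.monic
  obtain ⟨T, hT, S, hS, hTS⟩ := hnc
  -- the commutator is a nonzero element of D(w)
  set D : Module.End ℂ (MatPoly 2) := T * S - S * T with hD
  have hDmem : D ∈ DWcar P := by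
    have h1 : T * S ∈ DWcar P := DWcar_mul hT hS
    have h2 : S * T ∈ DWcar P := DWcar_mul hS hT
    have hneg : (algebraMap ℂ (Module.End ℂ (MatPoly 2)) (-1)) * (S * T) ∈ DWcar P :=
      DWcar_mul (DWcar_algebraMap P (-1)) h2
    have hEq : D = T * S + algebraMap ℂ (Module.End ℂ (MatPoly 2)) (-1) * (S * T) := by
      rw [← Algebra.smul_def, neg_one_smul, hD, sub_eq_add_neg]
    rw [hEq]
    exact DWcar_add h1 hneg
  have hDne : D ≠ 0 := sub_ne_zero.mpr hTS
  obtain ⟨MD, hMD⟩ := Lam_poly hdeg hmon hDmem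
  have hLamD : ∃ n, Lam P D n ≠ 0 := by
    by_contra hc
    push_neg at hc
    refine hDne (end_eq_zero hdeg hmon hDmem.1 fun n => ?_)
    rw [DWcar_apply hmon hDmem n, hc n, csmul_zero_mat]
  obtain ⟨n₀, hn₀⟩ := hLamD
  obtain ⟨i₀, j₀, hij⟩ : ∃ i j, Lam P D n₀ i j ≠ 0 := by
    by_contra hc
    push_neg at hc
    exact hn₀ (by ext i j; simpa using hc i j)
  have hMDne : MD i₀ j₀ ≠ 0 := fun h0 => hij (by rw [hMD n₀ i₀ j₀, h0, Polynomial.eval_zero])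
  set Sinf : Set ℕ := {n | (MD i₀ j₀).eval (n : ℂ) ≠ 0} with hSinfdef
  have hSinf : Sinf.Infinite := infinite_nonroots hMDne
  have hgood : ∀ n ∈ Sinf, Lam P S n * Lam P T n ≠ Lam P T n * Lam P S n := by
    intro n hn hcomm
    have h' : Lam P D n = 0 := by
      rw [hD, Lam_sub, Lam_mul hmon hT hS n, Lam_mul hmon hS hT n, hcomm, sub_self]
    exact hn (by rw [← hMD n i₀ j₀, h', Matrix.zero_apply])
  -- central elements have scalar eigenvalue matrices, polynomially in n
  have hscal : ∀ δ : Module.End ℂ (MatPoly 2), δ ∈ ZW P →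
      ∃ f : Polynomial ℂ, ∀ n : ℕ, Lam P δ n = (f.eval (n : ℂ)) • 1 := by
    intro δ hδ
    obtain ⟨hδD, hδc⟩ := mem_ZW_iff.mp hδ
    obtain ⟨Mδ, hMδ⟩ := Lam_poly hdeg hmon hδD
    have hcomm : ∀ (n : ℕ) (S' : Module.End ℂ (MatPoly 2)), S' ∈ DWcar P →
        Lam P δ n * Lam P S' n = Lam P S' n * Lam P δ n := by
      intro n S' hS'
      calc Lam P δ n * Lam P S' n = Lam P (S' * δ) n := (Lam_mul hmon hS' hδD n).symm
        _ = Lam P (δ * S') n := by rw [hδc S' hS']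
        _ = Lam P S' n * Lam P δ n := Lam_mul hmon hδD hS' n
    have hsc : ∀ n ∈ Sinf, ∃ c : ℂ, Lam P δ n = c • 1 := fun n hn =>
      scalar_of_comm (hcomm n S hS) (hcomm n T hT) (hgood n hn)
    have h01 : Mδ 0 1 = 0 := by
      refine poly_zero_of_infinite_nat hSinf fun n hn => ?_
      obtain ⟨c, hc⟩ := hsc n hn
      rw [← hMδ n 0 1, hc]
      simp [Matrix.smul_apply, Matrix.one_apply]
    have h10 : Mδ 1 0 = 0 := by
      refine poly_zero_of_infinite_nat hSinf fun n hn => ?_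
      obtain ⟨c, hc⟩ := hsc n hn
      rw [← hMδ n 1 0, hc]
      simp [Matrix.smul_apply, Matrix.one_apply]
    have hdiag : Mδ 0 0 = Mδ 1 1 := by
      have hsub : Mδ 0 0 - Mδ 1 1 = 0 := by
        refine poly_zero_of_infinite_nat hSinf fun n hn => ?_
        obtain ⟨c, hc⟩ := hsc n hn
        rw [Polynomial.eval_sub, ← hMδ n 0 0, ← hMδ n 1 1, hc]
        simp [Matrix.smul_apply, Matrix.one_apply]
      exact sub_eq_zero.mp hsub
    refine ⟨Mδ 0 0, fun n => mat2_ext ?_ ?_ ?_ ?_⟩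
    · rw [hMδ n 0 0, smul_one_apply_eq]
    · rw [hMδ n 0 1, h01, smul_one_apply_ne _ (by decide), Polynomial.eval_zero]
    · rw [hMδ n 1 0, h10, smul_one_apply_ne _ (by decide), Polynomial.eval_zero]
    · rw [hMδ n 1 1, ← hdiag, smul_one_apply_eq]
  choose F hF using fun δ : ZW P => hscal δ.1 δ.2
  -- the coercions
  have hval1 : ((1 : ZW P) : Module.End ℂ (MatPoly 2)) = 1 := rfl
  have hvalmul : ∀ δ δ' : ZW P,
      ((δ * δ' : ZW P) : Module.End ℂ (MatPoly 2))
        = (δ : Module.End ℂ (MatPoly 2)) * (δ' : Module.End ℂ (MatPoly 2)) := fun _ _ => rfl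
  have hvaladd : ∀ δ δ' : ZW P,
      ((δ + δ' : ZW P) : Module.End ℂ (MatPoly 2))
        = (δ : Module.End ℂ (MatPoly 2)) + (δ' : Module.End ℂ (MatPoly 2)) := fun _ _ => rfl
  have hmem : ∀ δ : ZW P, (δ : Module.End ℂ (MatPoly 2)) ∈ DWcar P :=
    fun δ => (mem_ZW_iff.mp δ.2).1
  -- homomorphism properties
  have hone : F 1 = 1 := by
    refine poly_ext_nat fun n => ?_
    have h1 := hF 1 n
    rw [hval1, Lam_one hmon n] at h1
    have h2 : ((F 1).eval (n : ℂ)) • (1 : Mat 2) = (1 : ℂ) • 1 := by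
      rw [← h1, one_smul]
    rw [smul_one_inj h2, Polynomial.eval_one]
  have hzero : F 0 = 0 := by
    refine poly_ext_nat fun n => ?_
    have h1 := hF 0 n
    have hval0 : ((0 : ZW P) : Module.End ℂ (MatPoly 2)) = 0 := rfl
    rw [hval0, Lam_zero] at h1
    have h2 : ((F 0).eval (n : ℂ)) • (1 : Mat 2) = (0 : ℂ) • 1 := by
      rw [← h1, zero_smul]
    rw [smul_one_inj h2, Polynomial.eval_zero]
  have hmul : ∀ δ δ' : ZW P, F (δ * δ') = F δ * F δ' := by
    intro δ δ'
    refine poly_ext_nat fun n => ?_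
    have h1 := hF (δ * δ') n
    rw [hvalmul δ δ', Lam_mul hmon (hmem δ) (hmem δ') n, hF δ n, hF δ' n] at h1
    have h2 : ((F (δ * δ')).eval (n : ℂ)) • (1 : Mat 2)
        = (((F δ).eval (n : ℂ)) * ((F δ').eval (n : ℂ))) • 1 := by
      rw [← h1, smul_mul_smul_comm, one_mul, mul_comm]
    rw [smul_one_inj h2, Polynomial.eval_mul]
  have hadd : ∀ δ δ' : ZW P, F (δ + δ') = F δ + F δ' := by
    intro δ δ'
    refine poly_ext_nat fun n => ?_
    have h1 := hF (δ + δ') n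
    rw [hvaladd δ δ', Lam_add, hF δ n, hF δ' n, ← add_smul] at h1
    rw [Polynomial.eval_add]
    exact (smul_one_inj h1).symm
  have halg : ∀ r : ℂ, F (algebraMap ℂ (ZW P) r) = algebraMap ℂ (Polynomial ℂ) r := by
    intro r
    refine poly_ext_nat fun n => ?_
    have h1 := hF (algebraMap ℂ (ZW P) r) n
    have hvala : ((algebraMap ℂ (ZW P) r : ZW P) : Module.End ℂ (MatPoly 2))
        = algebraMap ℂ (Module.End ℂ (MatPoly 2)) r := rfl
    rw [hvala, Lam_algebraMap hmon r n] at h1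
    rw [← smul_one_inj h1]
    simp [Polynomial.algebraMap_eq]
  refine ⟨{ toFun := F, map_one' := hone, map_mul' := hmul, map_zero' := hzero,
            map_add' := hadd, commutes' := halg }, ?_, ?_⟩
  · -- injectivity
    intro δ δ' hFe
    have hFe' : F δ = F δ' := hFe
    apply Subtype.ext
    have hv : ∀ n, (δ : Module.End ℂ (MatPoly 2)) (P n)
        = (δ' : Module.End ℂ (MatPoly 2)) (P n) := by
      intro n
      rw [DWcar_apply hmon (hmem δ) n, DWcar_apply hmon (hmem δ') n, hF δ n, hF δ' n, hFe']
    have hz : (δ : Module.End ℂ (MatPoly 2)) - (δ' : Module.End ℂ (MatPoly 2)) = 0 := by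
      refine end_eq_zero hdeg hmon ?_ fun n => ?_
      · exact Subalgebra.sub_mem _ (hmem δ).1 (hmem δ').1
      · rw [LinearMap.sub_apply, hv n, sub_self]
    exact sub_eq_zero.mp hz
  · intro δ n
    rw [DWcar_apply hmon (hmem δ) n, hF δ n]
    rfl
end
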